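/- Let G act on Y and let samples g₁, …, g_N ∈ G be given. Define Φ(y) = (max over i of F(gᵢ, y)) where F(g, y) = ∫_G L((g g') • y) dP(g') for a bounded measurable L and a finite measure P on G. If P is right-invariant under an element h (i.e., P(E h) = P(E) for all measurable E) and the sample set {gᵢ} satisfies {gᵢ h} = {g_{π(i)}} for a permutation π, then Φ(h • y) = Φ(y). -/
import Mathlib


open MeasureTheory

section Aux

variable {G : Type*} [Group G] [MeasurableSpace G] (P : Measure G)

/-- One-sided outer-measure inequality from invariance on measurable sets. -/
lemma soa_inv_le (b : G)
    (hPb : ∀ E : Set G, MeasurableSet E → P ((fun x => x * b) ⁻¹' E) = P E)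
    (s : Set G) : P ((fun x => x * b) ⁻¹' s) ≤ P s := by
  calc P ((fun x => x * b) ⁻¹' s)
      ≤ P ((fun x => x * b) ⁻¹' (toMeasurable P s)) :=
        measure_mono (Set.preimage_mono (subset_toMeasurable P s))
    _ = P (toMeasurable P s) := hPb _ (measurableSet_toMeasurable P s)
    _ = P s := measure_toMeasurable s

lemma soa_pre_add (b : G) (k j : ℕ) (s : Set G) :
    (fun x => x * b ^ (k + j)) ⁻¹' s
      = (fun x => x * b ^ k) ⁻¹' ((fun x => x * b ^ j) ⁻¹' s) := by
  ext x
  simp only [Set.mem_preimage, pow_add, mul_assoc]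

lemma soa_inv_pow_le (b : G)
    (hPb : ∀ E : Set G, MeasurableSet E → P ((fun x => x * b) ⁻¹' E) = P E)
    (k : ℕ) (s : Set G) : P ((fun x => x * b ^ k) ⁻¹' s) ≤ P s := by
  induction k with
  | zero => simp
  | succ k ih =>
      have h1 : (fun x => x * b ^ (1 + k)) ⁻¹' s
          = (fun x => x * b ^ 1) ⁻¹' ((fun x => x * b ^ k) ⁻¹' s) := soa_pre_add b 1 k s
      have h2 : k + 1 = 1 + k := by omega
      rw [h2, h1]
      calc P ((fun x => x * b ^ 1) ⁻¹' ((fun x => x * b ^ k) ⁻¹' s))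
          ≤ P ((fun x => x * b ^ k) ⁻¹' s) := by
            simpa using soa_inv_le P b hPb ((fun x => x * b ^ k) ⁻¹' s)
        _ ≤ P s := ih

/-- If `b` has finite order, the one-sided invariance upgrades to invariance on
all sets, for all powers of `b`. -/
lemma soa_inv_pow_eq (b : G)
    (hPb : ∀ E : Set G, MeasurableSet E → P ((fun x => x * b) ⁻¹' E) = P E)
    {M : ℕ} (hM : 0 < M) (hbM : b ^ M = 1) (k : ℕ) (s : Set G) :
    P ((fun x => x * b ^ k) ⁻¹' s) = P s := by
  refine le_antisymm (soa_inv_pow_le P b hPb k s) ?_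
  have hkM : (k * M - k) + k = k * M := by
    have : k ≤ k * M := Nat.le_mul_of_pos_right k hM
    omega
  have hid : (fun x => x * b ^ (k * M)) ⁻¹' s = s := by
    have : b ^ (k * M) = 1 := by rw [mul_comm, pow_mul, hbM, one_pow]
    simp [this]
  calc P s = P ((fun x => x * b ^ (k * M)) ⁻¹' s) := by rw [hid]
    _ = P ((fun x => x * b ^ (k * M - k)) ⁻¹' ((fun x => x * b ^ k) ⁻¹' s)) := by
        have hx := soa_pre_add b (k * M - k) k s
        rw [hkM] at hx
        rw [hx]
    _ ≤ P ((fun x => x * b ^ k) ⁻¹' s) := soa_inv_pow_le P b hPb _ _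

/-- Full invariance on all sets implies the right-translation map is null
measurable (every preimage of a measurable set is a.e. measurable). -/
lemma soa_nullMeasurable [IsFiniteMeasure P] (a : G)
    (hinv : ∀ s : Set G, P ((fun x => x * a) ⁻¹' s) = P s) :
    NullMeasurable (fun x => x * a) P := by
  intro E hE
  set s : Set G := (fun x => x * a) ⁻¹' E with hs
  set t := toMeasurable P s with ht
  set u := toMeasurable P sᶜ with hu
  have hts : s ⊆ t := subset_toMeasurable P s
  have hsu : sᶜ ⊆ u := subset_toMeasurable P sᶜ
  have hPt : P t = P E := by rw [ht, measure_toMeasurable]; exact hinv E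
  have hPu : P u = P Eᶜ := by
    rw [hu, measure_toMeasurable]
    have : sᶜ = (fun x => x * a) ⁻¹' Eᶜ := by rw [hs, Set.preimage_compl]
    rw [this]; exact hinv Eᶜ
  have huniv : t ∪ u = Set.univ := by
    apply Set.eq_univ_of_univ_subset
    calc Set.univ = s ∪ sᶜ := (Set.union_compl_self s).symm
      _ ⊆ t ∪ u := Set.union_subset_union hts hsu
  have hsum := measure_union_add_inter (μ := P) t (measurableSet_toMeasurable P sᶜ)
  rw [huniv, hPt, hPu] at hsum
  have hEc : P E + P Eᶜ = P Set.univ := measure_add_measure_compl hE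
  rw [hEc] at hsum
  have h0 : P (t ∩ u) = 0 := by
    have h' : P Set.univ + P (t ∩ u) = P Set.univ + 0 := by rw [add_zero]; exact hsum
    exact (ENNReal.add_right_inj (measure_ne_top P _)).mp h'
  refine ⟨t, measurableSet_toMeasurable P s, ?_⟩
  rw [ae_eq_set]
  constructor
  · rw [Set.diff_eq_empty.2 hts]; exact measure_empty
  · refine measure_mono_null ?_ h0
    intro x hx
    exact ⟨hx.1, hsu hx.2⟩

/-- Composing an a.e. strongly measurable real function with an invariant,
null-measurable right translation preserves a.e. strong measurability. -/
lemma soa_comp_aesm [IsFiniteMeasure P] (a : G)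
    (hinv : ∀ s : Set G, P ((fun x => x * a) ⁻¹' s) = P s)
    (u : G → ℝ) (hu : AEStronglyMeasurable u P) :
    AEStronglyMeasurable (fun x => u (x * a)) P := by
  have hnm : NullMeasurable (fun x => x * a) P := soa_nullMeasurable P a hinv
  set σ := hu.mk u with hσdef
  have hσ : StronglyMeasurable σ := hu.stronglyMeasurable_mk
  have heq : u =ᵐ[P] σ := hu.ae_eq_mk
  have h1 : AEMeasurable (fun x => σ (x * a)) P :=
    (MeasureTheory.Measurable.comp_nullMeasurable hσ.measurable hnm).aemeasurable
  have h2 : AEStronglyMeasurable (fun x => σ (x * a)) P := h1.aestronglyMeasurable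
  apply h2.congr
  have hz : P {x | u x ≠ σ x} = 0 := by
    have := heq
    rw [Filter.EventuallyEq, ae_iff] at this
    exact this
  have hz' : P {x | u (x * a) ≠ σ (x * a)} = 0 := by
    have hpre : {x | u (x * a) ≠ σ (x * a)} = (fun x => x * a) ⁻¹' {x | u x ≠ σ x} := rfl
    rw [hpre, hinv]; exact hz
  rw [Filter.EventuallyEq, ae_iff]
  simpa [eq_comm] using hz'

/-- Change of variables by an invariant right translation of finite order. -/
lemma soa_integral_comp [IsFiniteMeasure P] (a : G)
    (hinv : ∀ s : Set G, P ((fun x => x * a) ⁻¹' s) = P s)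
    (hinv' : ∀ s : Set G, P ((fun x => x * a⁻¹) ⁻¹' s) = P s)
    (F : G → ℝ) : ∫ x, F (x * a) ∂P = ∫ x, F x ∂P := by
  have hnm : NullMeasurable (fun x => x * a) P := soa_nullMeasurable P a hinv
  by_cases hF : AEStronglyMeasurable F P
  · set σ := hF.mk F with hσdef
    have hσ : StronglyMeasurable σ := hF.stronglyMeasurable_mk
    have heq : F =ᵐ[P] σ := hF.ae_eq_mk
    have hz : P {x | F x ≠ σ x} = 0 := by
      have := heq; rw [Filter.EventuallyEq, ae_iff] at this; exact this
    have e2 : ∫ x, F x ∂P = ∫ x, σ x ∂P := by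
      apply integral_congr_ae heq
    have e1 : ∫ x, F (x * a) ∂P = ∫ x, σ (x * a) ∂P := by
      apply integral_congr_ae
      rw [Filter.EventuallyEq, ae_iff]
      have hpre : {x | ¬ F (x * a) = σ (x * a)} = (fun x => x * a) ⁻¹' {x | F x ≠ σ x} := rfl
      rw [hpre, hinv]; exact hz
    rw [e1, e2]
    have hστ : AEMeasurable (fun x => σ (x * a)) P :=
      (MeasureTheory.Measurable.comp_nullMeasurable hσ.measurable hnm).aemeasurable
    have hσm : AEMeasurable σ P := hσ.measurable.aemeasurable
    have hmap : P.map (fun x => σ (x * a)) = P.map σ := by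
      ext B hB
      rw [Measure.map_apply_of_aemeasurable hστ hB, Measure.map_apply_of_aemeasurable hσm hB]
      exact hinv (σ ⁻¹' B)
    calc ∫ x, σ (x * a) ∂P
        = ∫ y, y ∂(P.map (fun x => σ (x * a))) :=
          (integral_map hστ aestronglyMeasurable_id).symm
      _ = ∫ y, y ∂(P.map σ) := by rw [hmap]
      _ = ∫ x, σ x ∂P := integral_map hσm aestronglyMeasurable_id
  · have hF' : ¬ AEStronglyMeasurable (fun x => F (x * a)) P := by
      intro hA
      apply hF
      have := soa_comp_aesm P a⁻¹ hinv' (fun x => F (x * a)) hA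
      simpa using this
    rw [integral_non_aestronglyMeasurable hF', integral_non_aestronglyMeasurable hF]

end Aux

/-- Sampled orbit anti-aliased (SOA) likelihood invariance: if the anti-aliasing
measure `P` is right-invariant under `h` and the sample set `{gᵢ}` is closed
under right translation by `h` (up to a permutation `π`), then the SOA
representation `Φ(y) = maxᵢ ∫ L((gᵢ g') • y) dP(g')` satisfies `Φ(h • y) = Φ(y)`. -/
theorem stmt_18 {G Y : Type*} [Group G] [MeasurableSpace G] [MulAction G Y]
    (P : Measure G) [IsFiniteMeasure P] (L : Y → ℝ) (hbd : ∃ C, ∀ y, |L y| ≤ C)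
    (N : ℕ) [NeZero N] (g : Fin N → G) (h : G)
    (hP : ∀ E : Set G, MeasurableSet E → P ((fun x => x * h⁻¹) ⁻¹' E) = P E)
    (π : Equiv.Perm (Fin N)) (hg : ∀ i, g i * h = g (π i)) (y : Y) :
    Finset.univ.sup' Finset.univ_nonempty
        (fun i => ∫ g', L ((g i * g') • (h • y)) ∂P)
      = Finset.univ.sup' Finset.univ_nonempty
        (fun i => ∫ g', L ((g i * g') • y) ∂P) := by
  -- `h` has finite order, forced by the permutation condition
  have hpow : ∀ (k : ℕ) (i : Fin N), g i * h ^ k = g ((π ^ k) i) := by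
    intro k
    induction k with
    | zero => intro i; simp
    | succ k ih =>
        intro i
        rw [pow_succ, ← mul_assoc, ih, hg, pow_succ']
        rfl
  set M := orderOf π with hMdef
  have hMpos : 0 < M := orderOf_pos π
  have hM1 : h ^ M = 1 := by
    obtain ⟨i⟩ : Nonempty (Fin N) := ⟨⟨0, Nat.pos_of_ne_zero (NeZero.ne N)⟩⟩
    have := hpow M i
    rw [hMdef, pow_orderOf_eq_one] at this
    simp only [Equiv.Perm.coe_one, id_eq] at this
    have h2 : g i * h ^ M = g i * 1 := by rw [this, mul_one]
    exact mul_left_cancel h2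
  -- upgrade to full invariance for `h⁻¹` and `h`
  have hM1' : h⁻¹ ^ M = 1 := by rw [inv_pow, hM1, inv_one]
  have hinv_inv : ∀ s : Set G, P ((fun x => x * h⁻¹) ⁻¹' s) = P s := by
    intro s
    have := soa_inv_pow_eq P h⁻¹ hP hMpos hM1' 1 s
    simpa using this
  have hhpow : (h⁻¹) ^ (M - 1) = h := by
    have h2 : (h⁻¹) ^ (M - 1) * h⁻¹ = 1 := by
      rw [← pow_succ, Nat.sub_add_cancel hMpos, hM1']
    exact mul_inv_eq_one.mp h2
  have hinv_h : ∀ s : Set G, P ((fun x => x * h) ⁻¹' s) = P s := by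
    intro s
    have := soa_inv_pow_eq P h⁻¹ hP hMpos hM1' (M - 1) s
    rwa [hhpow] at this
  have hinv_h' : ∀ s : Set G, P ((fun x => x * h⁻¹) ⁻¹' s) = P s := hinv_inv
  -- per-index change of variables
  have key : ∀ i : Fin N,
      (∫ g', L ((g i * g') • (h • y)) ∂P) = ∫ g', L ((g i * g') • y) ∂P := by
    intro i
    have hrw : (fun g' => L ((g i * g') • (h • y)))
        = fun g' => (fun x => L ((g i * x) • y)) (g' * h) := by
      funext g'
      simp only [smul_smul, mul_assoc]
    rw [hrw]
    exact soa_integral_comp P h hinv_h hinv_h' (fun x => L ((g i * x) • y))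
  apply Finset.sup'_congr _ rfl
  intro i _
  exact key i
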